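/- Let R be a commutative ring of prime characteristic p > 0. Suppose 𝔞 = 𝔞₁^{M₁} + ⋯ + 𝔞ₘ^{Mₘ}, where each 𝔞ᵢ ⊆ R is an ideal generated by at most lᵢ elements and Mᵢ ≥ 1 are integers. Set l := Σᵢ lᵢ. If a ≥ 0 and b > p^e(l − 1), then 𝔞^(a·p^e + b) = (𝔞^a)^[p^e] · 𝔞^b. -/

import Mathlib

/-- The Frobenius power `I^[q]` of an ideal. -/
def frobPow {R : Type*} [CommSemiring R] (I : Ideal R) (q : ℕ) : Ideal R :=
  Ideal.span ((fun f => f ^ q) '' (I : Set R))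

/-!
`𝔞^N` is spanned by products over `i` of monomials of degree `Mᵢ nᵢ` in the generators of `𝔞ᵢ`,
with `∑ nᵢ = N`. Writing every exponent as `c = q ⌊c/q⌋ + (c mod q)`, group `i` offers
`Dᵢ = ∑ ⌊c/q⌋ ≥ (Mᵢ nᵢ - lᵢ (q - 1)) / q` degrees of `q`-th powers, hence `⌊Dᵢ / Mᵢ⌋` factors
`f ^ q` with `f ∈ 𝔞ᵢ^{Mᵢ}`. For `N = a q + b` with `b > q (l - 1)` these add up to at least `a`,
so the monomial factors as `f ^ q * g` with `f ∈ 𝔞^a` and `g ∈ 𝔞^b`.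
-/

open Finset
open scoped Pointwise

lemma Finset.exists_le_sum_eq {ι : Type*} (s : Finset ι) (f : ι → ℕ) {k : ℕ}
    (hk : k ≤ ∑ i ∈ s, f i) : ∃ g ≤ f, ∑ i ∈ s, g i = k := by
  classical
  induction s using Finset.induction_on generalizing k with
  | empty => exact ⟨0, fun _ => Nat.zero_le _, by simp_all⟩
  | insert j s hj ih =>
    rw [sum_insert hj] at hk
    obtain ⟨g, hgf, hg⟩ := ih (k := k - min k (f j)) (by omega)
    refine ⟨Function.update g j (min k (f j)), fun i => ?_, ?_⟩
    · rcases eq_or_ne i j with rfl | hij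
      · simp
      · simpa [hij] using hgf i
    · rw [sum_insert hj, Function.update_self, sum_update_of_notMem hj, hg]
      omega

lemma Finset.sum_add_card_le_mul_sum_div_add {α : Type*} (s : Finset α) (c : α → ℕ) {q : ℕ}
    (hq : 0 < q) : ∑ y ∈ s, c y + #s ≤ q * ∑ y ∈ s, c y / q + #s * q :=
  calc ∑ y ∈ s, c y + #s = ∑ y ∈ s, (c y + 1) := by rw [sum_add_distrib, card_eq_sum_ones]
    _ ≤ ∑ y ∈ s, (q * (c y / q) + q) :=
      sum_le_sum fun y _ => by linarith [Nat.lt_div_mul_add (a := c y) hq]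
    _ = q * ∑ y ∈ s, c y / q + #s * q := by rw [sum_add_distrib, mul_sum, sum_const, smul_eq_mul]

lemma le_mul_sum_div_div_add_card {α : Type*} (s : Finset α) (c : α → ℕ) {q M n : ℕ}
    (hq : 0 < q) (hM : 1 ≤ M) (hc : ∑ y ∈ s, c y = M * n) :
    n ≤ q * ((∑ y ∈ s, c y / q) / M + #s) := by
  obtain rfl | hs := s.eq_empty_or_nonempty
  · simp_all; omega
  have hsum := s.sum_add_card_le_mul_sum_div_add c hq
  generalize ∑ y ∈ s, c y / q = D at hsum ⊢
  have hD : D + 1 ≤ M * (D / M + 1) := by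
    have := Nat.lt_div_mul_add (a := D) hM; linarith
  obtain ⟨M, rfl⟩ : ∃ M', M = M' + 1 := ⟨M - 1, by omega⟩
  obtain ⟨t, ht⟩ : ∃ t, #s = t + 1 := ⟨#s - 1, by have := hs.card_pos; omega⟩
  rw [ht, hc] at hsum
  rw [ht]
  refine Nat.le_of_mul_le_mul_left ?_ (Nat.succ_pos M)
  nlinarith [Nat.mul_le_mul_left q hD, Nat.zero_le (q * M * t)]

lemma exists_exponent_split {ι α : Type*} [Fintype ι] (S : ι → Finset α)
    (M : ι → ℕ) (hM : ∀ i, 1 ≤ M i) {q a b : ℕ} (hq : 0 < q) (hb : q * ∑ i, #(S i) < b + q)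
    (n : ι → ℕ) (hn : ∑ i, n i = a * q + b) (c : ι → α → ℕ)
    (hc : ∀ i, ∑ y ∈ S i, c i y = M i * n i) :
    ∃ (d r : ι → α → ℕ) (v w : ι → ℕ), c = (fun i y => q * d i y + r i y) ∧
      (∀ i, ∑ y ∈ S i, d i y = M i * v i) ∧ (∀ i, ∑ y ∈ S i, r i y = M i * w i) ∧
      ∑ i, v i = a ∧ ∑ i, w i = b := by
  set u : ι → ℕ := fun i => (∑ y ∈ S i, c i y / q) / M i
  have hau : a ≤ ∑ i, u i := by
    have hn_le : ∑ i, n i ≤ q * ∑ i, u i + q * ∑ i, #(S i) := by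
      rw [← mul_add, ← sum_add_distrib, mul_sum]
      exact sum_le_sum fun i _ => le_mul_sum_div_div_add_card (S i) (c i) hq (hM i) (hc i)
    rw [hn] at hn_le
    have : q * a < q * (∑ i, u i + 1) := by linarith
    exact Nat.lt_succ_iff.mp (Nat.lt_of_mul_lt_mul_left this)
  obtain ⟨v, hvu, hv⟩ := univ.exists_le_sum_eq u hau
  have hd : ∀ i, ∃ d ≤ fun y => c i y / q, ∑ y ∈ S i, d y = M i * v i := fun i =>
    (S i).exists_le_sum_eq _ <| (Nat.mul_le_mul_left _ (hvu i)).trans (Nat.mul_div_le _ _)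
  choose d hdc hd using hd
  have hqd : ∀ i y, q * d i y ≤ c i y := fun i y =>
    (Nat.mul_le_mul_left q (hdc i y)).trans (Nat.mul_div_le _ _)
  have hqv : ∀ i, q * v i ≤ n i := by
    intro i
    refine Nat.le_of_mul_le_mul_left ?_ (hM i)
    calc M i * (q * v i) = q * ∑ y ∈ S i, d i y := by rw [hd, mul_left_comm]
      _ ≤ M i * n i := by rw [← hc, mul_sum]; exact sum_le_sum fun y _ => hqd i y
  refine ⟨d, fun i y => c i y - q * d i y, v, fun i => n i - q * v i, ?_, hd, fun i => ?_, hv, ?_⟩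
  · exact funext₂ fun i y => (Nat.add_sub_cancel' (hqd i y)).symm
  · rw [sum_tsub_distrib _ fun y _ => hqd i y, ← mul_sum, hd, hc, Nat.mul_sub, mul_left_comm]
  · rw [sum_tsub_distrib _ fun i _ => hqv i, ← mul_sum, hv, hn]; simp [mul_comm]

section MonomialIdeals

variable {R : Type*} [CommSemiring R]

def monomialsOfDegree (S : Finset R) (k : ℕ) : Set R :=
  {x | ∃ c : R → ℕ, ∑ y ∈ S, c y = k ∧ ∏ y ∈ S, y ^ c y = x}

lemma prod_pow_mem_span_pow (S : Finset R) (c : R → ℕ) :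
    ∏ y ∈ S, y ^ c y ∈ Ideal.span (S : Set R) ^ ∑ y ∈ S, c y := by
  rw [← prod_pow_eq_pow_sum]
  exact Ideal.prod_mem_prod fun y hy => Ideal.pow_mem_pow (Ideal.subset_span hy) _

lemma span_pow_le_span_monomialsOfDegree (S : Finset R) (k : ℕ) :
    Ideal.span (S : Set R) ^ k ≤ Ideal.span (monomialsOfDegree S k) := by
  classical
  induction k with
  | zero =>
    rw [pow_zero, Ideal.one_eq_top, top_le_iff, Ideal.eq_top_iff_one]
    exact Ideal.subset_span ⟨0, by simp, by simp⟩
  | succ k ih =>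
    rw [pow_succ]
    refine (Ideal.mul_mono_left ih).trans ?_
    rw [Ideal.span_mul_span', Ideal.span_le]
    rintro _ ⟨_, ⟨c, rfl, rfl⟩, y, hy, rfl⟩
    refine Ideal.subset_span ⟨c + Pi.single y 1, ?_, ?_⟩
    · simp [sum_add_distrib, Finset.mem_coe.mp hy]
    · simp only [Pi.add_apply, pow_add, prod_mul_distrib]
      congr 1
      rw [prod_eq_single_of_mem y hy fun x _ hxy => by rw [Pi.single_eq_of_ne hxy, pow_zero],
        Pi.single_eq_same, pow_one]

lemma Ideal.pow_sum_le_sum_prod_pow {ι : Type*} [DecidableEq ι] (s : Finset ι) (I : ι → Ideal R)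
    (N : ℕ) : (∑ i ∈ s, I i) ^ N ≤ ∑ n ∈ s.piAntidiag N, ∏ i ∈ s, I i ^ n i := by
  rw [sum_pow_eq_sum_piAntidiag]
  exact sum_le_sum fun _ _ => Ideal.mul_le_right

lemma pow_sum_pow_span_le_of_forall_mem {ι : Type*} [Fintype ι] (S : ι → Finset R) (M : ι → ℕ)
    (N : ℕ) (T : Ideal R)
    (h : ∀ n : ι → ℕ, ∑ i, n i = N → ∀ c : ι → R → ℕ, (∀ i, ∑ y ∈ S i, c i y = M i * n i) →
      ∏ i, ∏ y ∈ S i, y ^ c i y ∈ T) :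
    (∑ i, Ideal.span (S i : Set R) ^ M i) ^ N ≤ T := by
  classical
  refine (Ideal.pow_sum_le_sum_prod_pow _ _ N).trans ?_
  rw [Ideal.sum_eq_sup]
  refine Finset.sup_le fun n hn => ?_
  calc ∏ i, (Ideal.span (S i : Set R) ^ M i) ^ n i
      = ∏ i, Ideal.span (S i : Set R) ^ (M i * n i) := by simp_rw [pow_mul]
    _ ≤ ∏ i, Ideal.span (monomialsOfDegree (S i) (M i * n i)) :=
      prod_le_prod' fun i _ => span_pow_le_span_monomialsOfDegree _ _
    _ = Ideal.span (∏ i, monomialsOfDegree (S i) (M i * n i)) := Ideal.prod_span _ _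
    _ ≤ T := by
      rw [Ideal.span_le]
      intro _ hmem
      obtain ⟨x, hx, rfl⟩ := (Set.mem_finsetProd _ _ _).mp hmem
      choose c hc hcx using fun i => hx (mem_univ i)
      simp_rw [← hcx]
      exact h n (mem_piAntidiag.mp hn).1 c hc

end MonomialIdeals

section Frobenius

variable {R : Type*} [CommSemiring R]

lemma frobPow_le_pow (I : Ideal R) (q : ℕ) : frobPow I q ≤ I ^ q :=
  Ideal.span_le.mpr <| Set.image_subset_iff.mpr fun _ hf => Ideal.pow_mem_pow hf q

variable {ι : Type*} [Fintype ι] (S : ι → Finset R) (M : ι → ℕ) {𝔞 : Ideal R}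

lemma prod_prod_pow_mem_pow (h𝔞 : ∀ i, Ideal.span (S i : Set R) ^ M i ≤ 𝔞) (d : ι → R → ℕ)
    (v : ι → ℕ) (hd : ∀ i, ∑ y ∈ S i, d i y = M i * v i) :
    ∏ i, ∏ y ∈ S i, y ^ d i y ∈ 𝔞 ^ ∑ i, v i := by
  rw [← prod_pow_eq_pow_sum]
  refine Ideal.prod_mem_prod fun i _ => Ideal.pow_right_mono (h𝔞 i) (v i) ?_
  rw [← pow_mul, ← hd]
  exact prod_pow_mem_span_pow (S i) (d i)

lemma prod_prod_pow_mem_frobPow_mul (h𝔞 : ∀ i, Ideal.span (S i : Set R) ^ M i ≤ 𝔞) (q : ℕ)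
    (d r : ι → R → ℕ) (v w : ι → ℕ) (hd : ∀ i, ∑ y ∈ S i, d i y = M i * v i)
    (hr : ∀ i, ∑ y ∈ S i, r i y = M i * w i) :
    ∏ i, ∏ y ∈ S i, y ^ (q * d i y + r i y) ∈ frobPow (𝔞 ^ ∑ i, v i) q * 𝔞 ^ ∑ i, w i := by
  have hsplit : ∏ i, ∏ y ∈ S i, y ^ (q * d i y + r i y) =
      (∏ i, ∏ y ∈ S i, y ^ d i y) ^ q * ∏ i, ∏ y ∈ S i, y ^ r i y := by
    simp only [pow_add, pow_mul', prod_mul_distrib, prod_pow]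
  rw [hsplit]
  exact Ideal.mul_mem_mul (Ideal.subset_span ⟨_, prod_prod_pow_mem_pow S M h𝔞 d v hd, rfl⟩)
    (prod_prod_pow_mem_pow S M h𝔞 r w hr)

end Frobenius

theorem pow_eq_frobPow_mul_sum_general {R : Type*} [CommRing R] (p : ℕ) (hp : p.Prime)
    (m : ℕ) (𝔞i : Fin m → Ideal R) (M : Fin m → ℕ) (hM : ∀ i, 1 ≤ M i)
    (li : Fin m → ℕ)
    (hgen : ∀ i, ∃ S : Finset R, S.card ≤ li i ∧ Ideal.span (S : Set R) = 𝔞i i)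
    (𝔞 : Ideal R) (h𝔞 : 𝔞 = ∑ i, 𝔞i i ^ M i)
    (l : ℕ) (hl : l = ∑ i, li i)
    (a b e : ℕ) (hb : (p : ℤ) ^ e * ((l : ℤ) - 1) < (b : ℤ)) :
    𝔞 ^ (a * p ^ e + b) = frobPow (𝔞 ^ a) (p ^ e) * 𝔞 ^ b := by
  choose S hScard hS using hgen
  have hq : 0 < p ^ e := pow_pos hp.pos e
  have h𝔞S : 𝔞 = ∑ i, Ideal.span (S i : Set R) ^ M i := by simp only [h𝔞, hS]
  have hb' : p ^ e * ∑ i, #(S i) < b + p ^ e := by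
    have hcard : ∑ i, #(S i) ≤ l := hl ▸ sum_le_sum fun i _ => hScard i
    zify at hcard ⊢
    nlinarith
  have hle : ∀ i, Ideal.span (S i : Set R) ^ M i ≤ 𝔞 := fun i => by
    rw [h𝔞S, Ideal.sum_eq_sup]
    exact le_sup (f := fun j => Ideal.span (S j : Set R) ^ M j) (mem_univ i)
  refine le_antisymm ?_ ?_
  · conv_lhs => rw [h𝔞S]
    refine pow_sum_pow_span_le_of_forall_mem S M _ _ fun n hn c hc => ?_
    obtain ⟨d, r, v, w, rfl, hd, hr, rfl, rfl⟩ :=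
      exists_exponent_split S M hM hq hb' n hn c hc
    exact prod_prod_pow_mem_frobPow_mul S M hle (p ^ e) d r v w hd hr
  · calc frobPow (𝔞 ^ a) (p ^ e) * 𝔞 ^ b ≤ (𝔞 ^ a) ^ p ^ e * 𝔞 ^ b :=
          Ideal.mul_mono_left (frobPow_le_pow _ _)
      _ = 𝔞 ^ (a * p ^ e + b) := by rw [← pow_mul, ← pow_add]

/-- Generalized Skoda-type lemma: if `𝔞 = 𝔞₁^{M₁} + ⋯ + 𝔞ₘ^{Mₘ}` with `𝔞ᵢ` generated
by at most `lᵢ` elements, `Mᵢ ≥ 1`, `l = Σᵢ lᵢ`, and `b > p^e(l − 1)`, then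
`𝔞^(a·p^e + b) = (𝔞^a)^[p^e] · 𝔞^b`. -/
theorem pow_eq_frobPow_mul_sum {R : Type*} [CommRing R] (p : ℕ) (hp : p.Prime) [CharP R p]
    (m : ℕ) (𝔞i : Fin m → Ideal R) (M : Fin m → ℕ) (hM : ∀ i, 1 ≤ M i)
    (li : Fin m → ℕ)
    (hgen : ∀ i, ∃ S : Finset R, S.card ≤ li i ∧ Ideal.span (S : Set R) = 𝔞i i)
    (𝔞 : Ideal R) (h𝔞 : 𝔞 = ∑ i, 𝔞i i ^ M i)
    (l : ℕ) (hl : l = ∑ i, li i)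
    (a b e : ℕ) (hb : (p : ℤ) ^ e * ((l : ℤ) - 1) < (b : ℤ)) :
    𝔞 ^ (a * p ^ e + b) = frobPow (𝔞 ^ a) (p ^ e) * 𝔞 ^ b :=
  pow_eq_frobPow_mul_sum_general p hp m 𝔞i M hM li hgen 𝔞 h𝔞 l hl a b e hb
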